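/- arXiv:0907.4771 — 3 statements merged into one kernel-verified Lean document; each statement's English description precedes it below -/
import Mathlib

section
/- For any positive real numbers ℓ and M there exists C > 0 such that for every c ∈ ℝ, every locally integrable real function q with ∫_c^{c+ℓ} |q(t)| dt ≤ M, and every real-valued solution u of -u'' + q u = 0 on [c, c+ℓ], one has ∫_c^{c+ℓ} |u(t)|² dt ≥ C (|u(c)|² + |u'(c)|²). -/
/-!
Let `S` be the maximum of `|u|` on `[c, c + ℓ]`. The equation bounds the oscillation of `u'` by
`∫ |q u| ≤ M S`, and comparing `u(c + ℓ) - u(c)` with `ℓ u'(c)` then gives `|u'(c)| ≤ (2/ℓ + M) S`,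
hence `|u'| ≤ γ S` with `γ = 2/ℓ + 2M`. So `|u| ≥ S/2` on an interval of length
`r = min ℓ (1/(2γ))` next to the maximum point, and `∫ u² ≥ r S²/4`, while
`u(c)² + u'(c)² ≤ (1 + (2/ℓ + M)²) S²`.
-/

open MeasureTheory intervalIntegral Set

theorem abs_integral_mul_le_integral_abs_mul {a b S : ℝ} {q g : ℝ → ℝ} (hab : a ≤ b)
    (hq : IntervalIntegrable q volume a b) (hg : ∀ t ∈ Ioc a b, |g t| ≤ S) :
    |∫ t in a..b, q t * g t| ≤ (∫ t in a..b, |q t|) * S := by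
  rw [← intervalIntegral.integral_mul_const, ← Real.norm_eq_abs]
  refine norm_integral_le_of_norm_le hab (ae_of_all _ fun t ht => ?_) (hq.abs.mul_const S)
  rw [Real.norm_eq_abs, abs_mul]
  exact mul_le_mul_of_nonneg_left (hg t ht) (abs_nonneg _)

theorem mul_abs_deriv_left_le {a b S K : ℝ} {u u' : ℝ → ℝ} (hab : a ≤ b)
    (hu : ∀ x ∈ Icc a b, HasDerivAt u (u' x) x) (hS : ∀ x ∈ Icc a b, |u x| ≤ S)
    (hK : ∀ x ∈ Icc a b, |u' x - u' a| ≤ K) :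
    (b - a) * |u' a| ≤ 2 * S + (b - a) * K := by
  have hv : ∀ x ∈ Icc a b,
      HasDerivWithinAt (fun y => u y - y * u' a) (u' x - u' a) (Icc a b) x := fun x hx =>
    ((hu x hx).sub ((hasDerivAt_id x).mul_const (u' a))).hasDerivWithinAt.congr_deriv (by simp)
  have hb : b ∈ Icc a b := right_mem_Icc.2 hab
  have hosc := norm_image_sub_le_of_norm_deriv_le_segment' hv
    (fun x hx => hK x (Ico_subset_Icc_self hx)) b hb
  have hua := hS a (left_mem_Icc.2 hab)
  have hub := hS b hb
  rw [Real.norm_eq_abs] at hosc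
  have hsplit : (b - a) * |u' a| = |(u b - u a) - ((u b - b * u' a) - (u a - a * u' a))| := by
    rw [← abs_of_nonneg (sub_nonneg.2 hab), ← abs_mul]
    ring_nf
  rw [hsplit]
  linarith [abs_sub (u b - u a) ((u b - b * u' a) - (u a - a * u' a)), abs_sub (u b) (u a)]

theorem exists_Icc_subset_Icc_mem {a b r x : ℝ} (hx : x ∈ Icc a b) (hr : 0 ≤ r)
    (hrb : r ≤ b - a) :
    ∃ s, Icc s (s + r) ⊆ Icc a b ∧ x ∈ Icc s (s + r) := by
  refine ⟨min x (b - r), Icc_subset_Icc (le_min hx.1 (by linarith)) ?_, min_le_left _ _, ?_⟩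
  · linarith [min_le_right x (b - r)]
  · rcases min_cases x (b - r) with ⟨h, _⟩ | ⟨h, _⟩ <;> rw [h] <;> linarith [hx.2]

theorem mul_sq_half_le_integral_sq {a b r K x₀ : ℝ} {u : ℝ → ℝ} (hu : ContinuousOn u (Icc a b))
    (hx₀ : x₀ ∈ Icc a b) (hr : 0 ≤ r) (hrb : r ≤ b - a) (hK : 0 ≤ K) (hKr : K * r ≤ |u x₀| / 2)
    (hosc : ∀ t ∈ Icc a b, |u x₀ - u t| ≤ K * |x₀ - t|) :
    r * (|u x₀| / 2) ^ 2 ≤ ∫ t in a..b, u t ^ 2 := by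
  obtain ⟨s, hsub, hx₀s⟩ := exists_Icc_subset_Icc_mem hx₀ hr hrb
  have hab : a ≤ b := hx₀.1.trans hx₀.2
  have hint : IntervalIntegrable (fun t => u t ^ 2) volume a b :=
    (hu.pow 2).intervalIntegrable_of_Icc hab
  have hs : a ≤ s ∧ s + r ≤ b := ⟨(hsub ⟨le_rfl, by linarith⟩).1, (hsub ⟨by linarith, le_rfl⟩).2⟩
  have hlow : ∀ t ∈ Icc s (s + r), (|u x₀| / 2) ^ 2 ≤ u t ^ 2 := by
    intro t ht
    have hdist : |x₀ - t| ≤ r :=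
      abs_sub_le_iff.2 ⟨by linarith [ht.1, hx₀s.2], by linarith [ht.2, hx₀s.1]⟩
    have hdev := (hosc t (hsub ht)).trans ((mul_le_mul_of_nonneg_left hdist hK).trans hKr)
    have hhalf : |u x₀| / 2 ≤ |u t| := by linarith [abs_sub_abs_le_abs_sub (u x₀) (u t)]
    rw [← sq_abs (u t)]
    exact pow_le_pow_left₀ (by positivity) hhalf 2
  calc r * (|u x₀| / 2) ^ 2 = ∫ _ in s..(s + r), (|u x₀| / 2) ^ 2 := by simp
    _ ≤ ∫ t in s..(s + r), u t ^ 2 :=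
        integral_mono_on (by linarith) intervalIntegrable_const
          (hint.mono_set (by rw [uIcc_of_le hab, uIcc_of_le (by linarith)]; exact hsub)) hlow
    _ ≤ ∫ t in a..b, u t ^ 2 :=
        integral_mono_interval hs.1 (by linarith) hs.2 (ae_of_all _ fun t => sq_nonneg _) hint

section Solution

variable {c ℓ M S : ℝ} {q u u' : ℝ → ℝ}

theorem abs_deriv_sub_deriv_left_le (hq : IntegrableOn q (Icc c (c + ℓ)))
    (hqM : (∫ t in c..(c + ℓ), |q t|) ≤ M)
    (hu' : ∀ x ∈ Icc c (c + ℓ), u' x = u' c + ∫ t in c..x, q t * u t)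
    (hS : ∀ x ∈ Icc c (c + ℓ), |u x| ≤ S) :
    ∀ x ∈ Icc c (c + ℓ), |u' x - u' c| ≤ M * S := by
  intro x hx
  have hcl : c ≤ c + ℓ := hx.1.trans hx.2
  have hqI : IntervalIntegrable q volume c (c + ℓ) :=
    (intervalIntegrable_iff_integrableOn_Icc_of_le hcl).2 hq
  have hS0 : 0 ≤ S := (abs_nonneg _).trans (hS x hx)
  rw [hu' x hx, add_sub_cancel_left]
  calc |∫ t in c..x, q t * u t|
      ≤ (∫ t in c..x, |q t|) * S :=
        abs_integral_mul_le_integral_abs_mul hx.1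
          (hqI.mono_set (by rw [uIcc_of_le hx.1, uIcc_of_le hcl]; exact Icc_subset_Icc le_rfl hx.2))
          fun t ht => hS t ⟨ht.1.le, ht.2.trans hx.2⟩
    _ ≤ (∫ t in c..(c + ℓ), |q t|) * S := by
        gcongr
        exact integral_mono_interval le_rfl hx.1 hx.2 (ae_of_all _ fun t => abs_nonneg _) hqI.abs
    _ ≤ M * S := by gcongr

theorem abs_deriv_left_le (hℓ : 0 < ℓ) (hq : IntegrableOn q (Icc c (c + ℓ)))
    (hqM : (∫ t in c..(c + ℓ), |q t|) ≤ M) (hu : ∀ x ∈ Icc c (c + ℓ), HasDerivAt u (u' x) x)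
    (hu' : ∀ x ∈ Icc c (c + ℓ), u' x = u' c + ∫ t in c..x, q t * u t)
    (hS : ∀ x ∈ Icc c (c + ℓ), |u x| ≤ S) :
    |u' c| ≤ (2 / ℓ + M) * S := by
  have h := mul_abs_deriv_left_le (by linarith) hu hS (abs_deriv_sub_deriv_left_le hq hqM hu' hS)
  rw [add_sub_cancel_left] at h
  rw [show (2 / ℓ + M) * S = (2 * S + ℓ * (M * S)) / ℓ by field_simp, le_div_iff₀ hℓ]
  linarith

theorem abs_deriv_le (hℓ : 0 < ℓ) (hq : IntegrableOn q (Icc c (c + ℓ)))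
    (hqM : (∫ t in c..(c + ℓ), |q t|) ≤ M) (hu : ∀ x ∈ Icc c (c + ℓ), HasDerivAt u (u' x) x)
    (hu' : ∀ x ∈ Icc c (c + ℓ), u' x = u' c + ∫ t in c..x, q t * u t)
    (hS : ∀ x ∈ Icc c (c + ℓ), |u x| ≤ S) :
    ∀ x ∈ Icc c (c + ℓ), |u' x| ≤ (2 / ℓ + 2 * M) * S := by
  intro x hx
  calc |u' x| ≤ |u' c| + |u' x - u' c| := by
        linarith [abs_sub_abs_le_abs_sub (u' x) (u' c)]
    _ ≤ (2 / ℓ + M) * S + M * S :=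
        add_le_add (abs_deriv_left_le hℓ hq hqM hu hu' hS)
          (abs_deriv_sub_deriv_left_le hq hqM hu' hS x hx)
    _ = (2 / ℓ + 2 * M) * S := by ring

end Solution

/-- A priori lower bound on the local `L²` norm of solutions of `-u'' + q u = 0`,
uniform over `c`, over potentials `q` with `∫_c^{c+ℓ}|q| ≤ M`, and over solutions `u`. -/
theorem stmt2 (ℓ M : ℝ) (hℓ : 0 < ℓ) (hM : 0 < M) :
    ∃ C > 0, ∀ (c : ℝ) (q u u' : ℝ → ℝ),
      IntegrableOn q (Set.Icc c (c + ℓ)) →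
      (∫ t in c..(c + ℓ), |q t|) ≤ M →
      (∀ x ∈ Set.Icc c (c + ℓ), HasDerivAt u (u' x) x) →
      (∀ x ∈ Set.Icc c (c + ℓ), u' x = u' c + ∫ t in c..x, q t * u t) →
      C * ((u c) ^ 2 + (u' c) ^ 2) ≤ ∫ t in c..(c + ℓ), (u t) ^ 2 := by
  set β := 2 / ℓ + M
  set γ := 2 / ℓ + 2 * M
  set r := min ℓ (1 / (2 * γ))
  have hγ : 0 < γ := by positivity
  have hr : 0 < r := lt_min hℓ (by positivity)
  have hγr : γ * r ≤ 1 / 2 := by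
    calc γ * r ≤ γ * (1 / (2 * γ)) := by gcongr; exact min_le_right _ _
      _ = 1 / 2 := by field_simp
  refine ⟨r / (4 * (1 + β ^ 2)), by positivity, ?_⟩
  intro c q u u' hq hqM hu hu'
  have hcl : c ≤ c + ℓ := by linarith
  have hcont : ContinuousOn u (Icc c (c + ℓ)) := fun x hx =>
    (hu x hx).continuousAt.continuousWithinAt
  obtain ⟨x₀, hx₀, hmax⟩ := isCompact_Icc.exists_isMaxOn (nonempty_Icc.2 hcl) hcont.abs
  have hS : ∀ x ∈ Icc c (c + ℓ), |u x| ≤ |u x₀| := fun x hx => hmax hx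
  have hosc : ∀ t ∈ Icc c (c + ℓ), |u x₀ - u t| ≤ γ * |u x₀| * |x₀ - t| := fun t ht => by
    simpa only [Real.norm_eq_abs] using
      (convex_Icc c (c + ℓ)).norm_image_sub_le_of_norm_hasDerivWithin_le
        (fun x hx => (hu x hx).hasDerivWithinAt) (abs_deriv_le hℓ hq hqM hu hu' hS) ht hx₀
  have hmass := mul_sq_half_le_integral_sq hcont hx₀ hr.le (by simp [r])
    (by positivity) (by nlinarith [abs_nonneg (u x₀)]) hosc
  have hu'c := abs_deriv_left_le hℓ hq hqM hu hu' hS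
  have huc := hS c (left_mem_Icc.2 hcl)
  calc r / (4 * (1 + β ^ 2)) * (u c ^ 2 + u' c ^ 2)
      ≤ r / (4 * (1 + β ^ 2)) * ((1 + β ^ 2) * |u x₀| ^ 2) := by
        gcongr
        nlinarith [sq_abs (u c), sq_abs (u' c), abs_nonneg (u c), abs_nonneg (u' c)]
    _ = r * (|u x₀| / 2) ^ 2 := by field_simp; ring
    _ ≤ ∫ t in c..(c + ℓ), u t ^ 2 := hmass
end

section
/- Let u be a real-valued solution of -u'' + q u = 0 on [c, c+ℓ] with |u(c)|² + |u'(c)|² = 1, and suppose there are constants 0 < C₁ ≤ C₂ with C₁ ≤ |u(x)|² + |u'(x)|² ≤ C₂ for all x ∈ [c, c+ℓ]. Then for every 0 < α < ℓ/(2+ℓ) there exists x₀ ∈ [c, c+ℓ] with |u(x₀)| ≥ α √(C₁/2). -/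
/-!
Since `u² + u'² ≥ C₁`, we have `|u| + |u'| ≥ √(C₁/2)` everywhere. If `|u| < α √(C₁/2)` held on
all of `[c, c+ℓ]`, then `|u'| > (1 - α) √(C₁/2)` there, so by the mean value theorem `u` would move
by more than `(1 - α) √(C₁/2) ℓ` across the interval, while its two endpoint values differ by less
than `2α √(C₁/2)`. These are incompatible exactly when `α < ℓ/(2+ℓ)`.
-/

lemma sqrt_half_le_abs_add_abs {C a b : ℝ} (h : C ≤ a ^ 2 + b ^ 2) :
    Real.sqrt (C / 2) ≤ |a| + |b| := by
  rw [Real.sqrt_le_left (by positivity)]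
  nlinarith [abs_nonneg a, abs_nonneg b, sq_abs a, sq_abs b]

lemma mul_sub_le_abs_sub_of_le_abs_deriv {f f' : ℝ → ℝ} {a b m : ℝ} (hab : a ≤ b)
    (hf : ∀ x ∈ Set.Icc a b, HasDerivAt f (f' x) x)
    (hm : ∀ x ∈ Set.Icc a b, m ≤ |f' x|) :
    m * (b - a) ≤ |f b - f a| := by
  rcases hab.eq_or_lt with rfl | hab
  · simp
  have hcont : ContinuousOn f (Set.Icc a b) := fun x hx =>
    (hf x hx).continuousAt.continuousWithinAt
  obtain ⟨ξ, hξ, hslope⟩ := exists_hasDerivAt_eq_slope f f' hab hcont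
    (fun x hx => hf x (Set.Ioo_subset_Icc_self hx))
  have hm' := hm ξ (Set.Ioo_subset_Icc_self hξ)
  rwa [hslope, abs_div, abs_of_pos (sub_pos.mpr hab), le_div_iff₀ (sub_pos.mpr hab)] at hm'

lemma sub_mul_le_abs_sub_of_forall_abs_lt {u u' : ℝ → ℝ} {a b C ε : ℝ} (hab : a ≤ b)
    (hu : ∀ x ∈ Set.Icc a b, HasDerivAt u (u' x) x)
    (hC : ∀ x ∈ Set.Icc a b, C ≤ |u x| + |u' x|)
    (hsmall : ∀ x ∈ Set.Icc a b, |u x| < ε) :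
    (C - ε) * (b - a) ≤ |u b - u a| :=
  mul_sub_le_abs_sub_of_le_abs_deriv hab hu fun x hx => by
    linarith [hC x hx, hsmall x hx]

theorem stmt3_general (c ℓ C₁ C₂ : ℝ) (hℓ : 0 < ℓ)
    (u u' : ℝ → ℝ)
    (hu : ∀ x ∈ Set.Icc c (c + ℓ), HasDerivAt u (u' x) x)
    (hbd : ∀ x ∈ Set.Icc c (c + ℓ),
      C₁ ≤ (u x) ^ 2 + (u' x) ^ 2 ∧ (u x) ^ 2 + (u' x) ^ 2 ≤ C₂)
    (α : ℝ) (hα1 : α < ℓ / (2 + ℓ)) :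
    ∃ x₀ ∈ Set.Icc c (c + ℓ), α * Real.sqrt (C₁ / 2) ≤ |u x₀| := by
  by_contra! hsmall
  set C₃ := Real.sqrt (C₁ / 2)
  have hleft : c ∈ Set.Icc c (c + ℓ) := ⟨le_rfl, by linarith⟩
  have hright : c + ℓ ∈ Set.Icc c (c + ℓ) := ⟨by linarith, le_rfl⟩
  have hmove : (C₃ - α * C₃) * (c + ℓ - c) ≤ |u (c + ℓ) - u c| :=
    sub_mul_le_abs_sub_of_forall_abs_lt (by linarith) hu
      (fun x hx => sqrt_half_le_abs_add_abs (hbd x hx).1) hsmall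
  have hstay : |u (c + ℓ) - u c| < 2 * (α * C₃) := by
    linarith [abs_sub (u (c + ℓ)) (u c), hsmall _ hleft, hsmall _ hright]
  have hαC₃ : 0 < α * C₃ := (abs_nonneg _).trans_lt (hsmall _ hleft)
  have hC₃ : 0 < C₃ := lt_of_le_of_ne (Real.sqrt_nonneg _) fun h => by
    rw [← h, mul_zero] at hαC₃; exact hαC₃.false
  have hα : ℓ < α * (2 + ℓ) := by
    rw [add_sub_cancel_left] at hmove
    nlinarith
  rw [lt_div_iff₀ (by linarith)] at hα1
  linarith

/-- If a normalized real solution of `-u'' + q u = 0` satisfies the two-sided bound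
`C₁ ≤ u² + u'² ≤ C₂` on `[c, c+ℓ]`, then for every `0 < α < ℓ/(2+ℓ)` there is a point
`x₀` where `|u(x₀)| ≥ α √(C₁/2)`. -/
theorem stmt3 (c ℓ C₁ C₂ : ℝ) (hℓ : 0 < ℓ) (hC₁ : 0 < C₁) (hC12 : C₁ ≤ C₂)
    (q u u' : ℝ → ℝ)
    (hu : ∀ x ∈ Set.Icc c (c + ℓ), HasDerivAt u (u' x) x)
    (hode : ∀ x ∈ Set.Icc c (c + ℓ), u' x = u' c + ∫ t in c..x, q t * u t)
    (hnorm : (u c) ^ 2 + (u' c) ^ 2 = 1)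
    (hbd : ∀ x ∈ Set.Icc c (c + ℓ),
      C₁ ≤ (u x) ^ 2 + (u' x) ^ 2 ∧ (u x) ^ 2 + (u' x) ^ 2 ≤ C₂)
    (α : ℝ) (hα0 : 0 < α) (hα1 : α < ℓ / (2 + ℓ)) :
    ∃ x₀ ∈ Set.Icc c (c + ℓ), α * Real.sqrt (C₁ / 2) ≤ |u x₀| :=
  stmt3_general c ℓ C₁ C₂ hℓ u u' hu hbd α hα1
end

section
/- Let s ∈ (0,1), M > 0, and let ρ be a bounded density supported in [η_min, η_max]. Suppose u : ℤ → ℝ with (u(x), u(x+1)) ≠ (0,0), and suppose u(x), u(x+1), u(y), u(y+1) do not depend on the parameter η. Then there is C = C(s, M, ρ) such that for all E with |E - η| ≤ M on the support of ρ: ∫_{η_min}^{η_max} |u(y)|^s / |u(x+1) + (E - η) u(x)|^s · ρ(η) dη ≤ C · ‖(u(y), u(y+1))‖^s / ‖(u(x), u(x+1))‖^s. -/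
/-!
Since `ρ ≤ K`, it suffices to bound `∫ |q + (E - η) p|^{-s} dη` by `C (|p| + |q|)^{-s}` for
`(p, q) = (u x, u (x+1))`, as `|p| + |q|` dominates the Euclidean norm. If `|q| > 2M|p|`, the
integrand stays below `(|q|/2)^{-s}` on the support. Otherwise `p ≠ 0` and
`|q + (E - η) p| = |p| |η - β|` with `β = E + q/p` within `3M` of the support, so the integral is
at most `|p|^{-s}` times that of the integrable singularity `|t|^{-s}` over `[-3M, 3M]`.
-/

open MeasureTheory intervalIntegral Set

section AbsRpow

variable {r : ℝ}

lemma intervalIntegrable_abs_rpow (hr : -1 < r) (a b : ℝ) :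
    IntervalIntegrable (fun t : ℝ => |t| ^ r) volume a b := by
  have hpos : ∀ c, 0 ≤ c → IntervalIntegrable (fun t : ℝ => |t| ^ r) volume 0 c := by
    intro c hc
    refine (intervalIntegrable_rpow' hr).congr fun t ht => ?_
    rw [uIoc_of_le hc] at ht
    simp only [abs_of_pos ht.1]
  have hall : ∀ c, IntervalIntegrable (fun t : ℝ => |t| ^ r) volume 0 c := by
    intro c
    rcases le_total 0 c with hc | hc
    · exact hpos c hc
    · rw [IntervalIntegrable.iff_comp_neg, neg_zero]
      simpa only [abs_neg] using hpos (-c) (neg_nonneg.2 hc)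
  exact (hall a).symm.trans (hall b)

lemma integral_abs_rpow_of_nonneg (hr : -1 < r) {c : ℝ} (hc : 0 ≤ c) :
    ∫ t in (0 : ℝ)..c, |t| ^ r = c ^ (r + 1) / (r + 1) := by
  have hcongr : EqOn (fun t : ℝ => |t| ^ r) (fun t => t ^ r) (uIcc 0 c) := fun t ht => by
    rw [uIcc_of_le hc] at ht
    simp only [abs_of_nonneg ht.1]
  rw [integral_congr hcongr, integral_rpow (Or.inl hr), Real.zero_rpow (by linarith), sub_zero]

lemma integral_abs_rpow_symmetric (hr : -1 < r) {L : ℝ} (hL : 0 ≤ L) :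
    ∫ t in -L..L, |t| ^ r = 2 * (L ^ (r + 1) / (r + 1)) := by
  have hneg : ∫ t in -L..0, |t| ^ r = ∫ t in (0 : ℝ)..L, |t| ^ r := by
    simpa only [abs_neg, neg_zero] using
      (integral_comp_neg (a := 0) (b := L) (fun t => |t| ^ r)).symm
  rw [← integral_add_adjacent_intervals (intervalIntegrable_abs_rpow hr _ _)
    (intervalIntegrable_abs_rpow hr _ _), hneg, integral_abs_rpow_of_nonneg hr hL, two_mul]

lemma integral_abs_sub_rpow_le (hr : -1 < r) {a b β L : ℝ} (hab : a ≤ b)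
    (ha : |a - β| ≤ L) (hb : |b - β| ≤ L) :
    ∫ η in a..b, |η - β| ^ r ≤ 2 * (L ^ (r + 1) / (r + 1)) := by
  rw [integral_comp_sub_right (fun t => |t| ^ r) β,
    ← integral_abs_rpow_symmetric hr ((abs_nonneg _).trans ha)]
  exact integral_mono_interval (abs_le.1 ha).1 (by linarith) (abs_le.1 hb).2
    (Filter.Eventually.of_forall fun t => by positivity) (intervalIntegrable_abs_rpow hr _ _)

end AbsRpow

lemma rpow_neg_le_of_le_mul {x y c s : ℝ} (hx : 0 < x) (hy : 0 < y) (hs : 0 ≤ s)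
    (h : x ≤ c * y) : y ^ (-s) ≤ c ^ s * x ^ (-s) := by
  have hc : 0 < c := pos_of_mul_pos_left (hx.trans_le h) hy.le
  calc y ^ (-s) = c ^ s * (c * y) ^ (-s) := by
        rw [Real.mul_rpow hc.le hy.le, Real.rpow_neg hc.le, ← mul_assoc,
          mul_inv_cancel₀ (Real.rpow_pos_of_pos hc s).ne', one_mul]
    _ ≤ c ^ s * x ^ (-s) := mul_le_mul_of_nonneg_left
        (Real.rpow_le_rpow_of_nonpos hx h (neg_nonpos.2 hs)) (by positivity)

lemma sqrt_sq_add_sq_le_abs_add_abs (a b : ℝ) : √(a ^ 2 + b ^ 2) ≤ |a| + |b| := by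
  rw [Real.sqrt_le_left (by positivity)]
  nlinarith [sq_abs a, sq_abs b, abs_nonneg a, abs_nonneg b]

lemma integral_mul_le_const_mul_integral {f g : ℝ → ℝ} {a b K : ℝ} (hab : a ≤ b)
    (hg : IntervalIntegrable g volume a b) (hg0 : ∀ t, 0 ≤ g t) (hf0 : ∀ t, 0 ≤ f t)
    (hfK : ∀ t, f t ≤ K) :
    ∫ t in a..b, g t * f t ≤ K * ∫ t in a..b, g t := by
  rw [← intervalIntegral.integral_const_mul, integral_of_le hab, integral_of_le hab]
  refine integral_mono_of_nonneg (ae_of_all _ fun t => mul_nonneg (hg0 t) (hf0 t))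
    (hg.1.const_mul K) (ae_of_all _ fun t => ?_)
  simpa only [mul_comm K] using mul_le_mul_of_nonneg_left (hfK t) (hg0 t)

section AffineSingularity

variable {r s M a b p q E : ℝ}

lemma abs_add_sub_mul_eq (hp : p ≠ 0) (η : ℝ) :
    |q + (E - η) * p| = |p| * |η - (E + q / p)| := by
  rw [← abs_mul, ← abs_neg]
  congr 1
  field_simp
  ring

lemma intervalIntegrable_abs_add_sub_mul_rpow (hr : -1 < r) :
    IntervalIntegrable (fun η => |q + (E - η) * p| ^ r) volume a b := by
  rcases eq_or_ne p 0 with rfl | hp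
  · simp
  simp_rw [abs_add_sub_mul_eq hp, Real.mul_rpow (abs_nonneg _) (abs_nonneg _)]
  refine IntervalIntegrable.const_mul ?_ _
  simpa using (intervalIntegrable_abs_rpow hr (a - (E + q / p)) (b - (E + q / p))).comp_sub_right
    (E + q / p)

lemma integral_abs_add_sub_mul_rpow_neg_le_of_le (hs0 : 0 ≤ s) (hs1 : s < 1) (hab : a ≤ b)
    (hE : ∀ η ∈ Icc a b, |E - η| ≤ M) (hp : p ≠ 0) (hq : |q| ≤ 2 * M * |p|) :
    ∫ η in a..b, |q + (E - η) * p| ^ (-s) ≤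
      (1 + 2 * M) ^ s * (2 * ((3 * M) ^ (-s + 1) / (-s + 1))) * (|p| + |q|) ^ (-s) := by
  have hp0 : 0 < |p| := abs_pos.2 hp
  have hqp : |q / p| ≤ 2 * M := by rwa [abs_div, div_le_iff₀ hp0]
  have hβ : ∀ η ∈ Icc a b, |η - (E + q / p)| ≤ 3 * M := fun η hη => by
    have := abs_sub_le η E (E + q / p)
    rw [abs_sub_comm η E, show E - (E + q / p) = -(q / p) by ring, abs_neg] at this
    linarith [hE η hη]
  have hM0 : 0 ≤ M := (abs_nonneg _).trans (hE a ⟨le_rfl, hab⟩)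
  have hs1' : 0 < -s + 1 := by linarith
  calc ∫ η in a..b, |q + (E - η) * p| ^ (-s)
      = |p| ^ (-s) * ∫ η in a..b, |η - (E + q / p)| ^ (-s) := by
        simp_rw [abs_add_sub_mul_eq hp, Real.mul_rpow (abs_nonneg _) (abs_nonneg _)]
        exact intervalIntegral.integral_const_mul _ _
    _ ≤ |p| ^ (-s) * (2 * ((3 * M) ^ (-s + 1) / (-s + 1))) :=
        mul_le_mul_of_nonneg_left (integral_abs_sub_rpow_le (by linarith) hab
          (hβ a ⟨le_rfl, hab⟩) (hβ b ⟨hab, le_rfl⟩)) (by positivity)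
    _ ≤ ((1 + 2 * M) ^ s * (|p| + |q|) ^ (-s)) * (2 * ((3 * M) ^ (-s + 1) / (-s + 1))) :=
        mul_le_mul_of_nonneg_right (rpow_neg_le_of_le_mul (by positivity) hp0 hs0
          (by rw [add_mul, one_mul]; linarith)) (by positivity)
    _ = _ := by ring

lemma integral_abs_add_sub_mul_rpow_neg_le_of_lt (hs0 : 0 ≤ s) (hs1 : s < 1) (hM : 0 < M)
    (hab : a ≤ b) (hE : ∀ η ∈ Icc a b, |E - η| ≤ M) (hq : 2 * M * |p| < |q|) :
    ∫ η in a..b, |q + (E - η) * p| ^ (-s) ≤ (2 + 1 / M) ^ s * (b - a) * (|p| + |q|) ^ (-s) := by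
  have hq0 : 0 < |q| / 2 := by linarith [abs_nonneg p, mul_nonneg hM.le (abs_nonneg p)]
  have hlow : ∀ η ∈ Icc a b, |q| / 2 ≤ |q + (E - η) * p| := fun η hη => by
    have hEp : |(E - η) * p| ≤ M * |p| := by
      rw [abs_mul]
      exact mul_le_mul_of_nonneg_right (hE η hη) (abs_nonneg p)
    linarith [abs_sub_abs_le_abs_add q ((E - η) * p)]
  have hsum : |p| + |q| ≤ (2 + 1 / M) * (|q| / 2) := by
    have : |p| ≤ |q| / (2 * M) := by rw [le_div_iff₀ (by positivity)]; linarith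
    calc |p| + |q| ≤ |q| / (2 * M) + |q| := by linarith
      _ = (2 + 1 / M) * (|q| / 2) := by field_simp; ring
  calc ∫ η in a..b, |q + (E - η) * p| ^ (-s)
      ≤ ∫ _ in a..b, (|q| / 2) ^ (-s) :=
        integral_mono_on hab (intervalIntegrable_abs_add_sub_mul_rpow (by linarith))
          intervalIntegrable_const fun η hη =>
            Real.rpow_le_rpow_of_nonpos hq0 (hlow η hη) (neg_nonpos.2 hs0)
    _ = (b - a) * (|q| / 2) ^ (-s) := by rw [intervalIntegral.integral_const, smul_eq_mul]
    _ ≤ (b - a) * ((2 + 1 / M) ^ s * (|p| + |q|) ^ (-s)) :=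
        mul_le_mul_of_nonneg_left
          (rpow_neg_le_of_le_mul (by linarith [abs_nonneg p]) hq0 hs0 hsum) (by linarith)
    _ = _ := by ring

lemma exists_integral_abs_add_sub_mul_rpow_neg_le (hs0 : 0 ≤ s) (hs1 : s < 1) (hM : 0 < M)
    (hab : a ≤ b) :
    ∃ C, 0 ≤ C ∧ ∀ p q E : ℝ, (p ≠ 0 ∨ q ≠ 0) → (∀ η ∈ Icc a b, |E - η| ≤ M) →
      ∫ η in a..b, |q + (E - η) * p| ^ (-s) ≤ C * (|p| + |q|) ^ (-s) := by
  set C₁ := (1 + 2 * M) ^ s * (2 * ((3 * M) ^ (-s + 1) / (-s + 1)))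
  set C₂ := (2 + 1 / M) ^ s * (b - a)
  have hC₁ : 0 ≤ C₁ := by
    have : 0 < -s + 1 := by linarith
    positivity
  have hC₂ : 0 ≤ C₂ := mul_nonneg (by positivity) (by linarith)
  refine ⟨C₁ + C₂, add_nonneg hC₁ hC₂, fun p q E hpq hE => ?_⟩
  rcases le_or_gt |q| (2 * M * |p|) with hq | hq
  · have hp : p ≠ 0 := by
      rintro rfl
      exact hpq.resolve_left (not_not.2 rfl) (abs_nonpos_iff.1 (by simpa using hq))
    calc _ ≤ C₁ * (|p| + |q|) ^ (-s) :=
          integral_abs_add_sub_mul_rpow_neg_le_of_le hs0 hs1 hab hE hp hq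
      _ ≤ (C₁ + C₂) * (|p| + |q|) ^ (-s) := by gcongr; linarith
  · calc _ ≤ C₂ * (|p| + |q|) ^ (-s) :=
          integral_abs_add_sub_mul_rpow_neg_le_of_lt hs0 hs1 hM hab hE hq
      _ ≤ (C₁ + C₂) * (|p| + |q|) ^ (-s) := by gcongr; linarith

end AffineSingularity

theorem stmt12_general (s M ηmin ηmax : ℝ) (hs : s ∈ Set.Ioo (0 : ℝ) 1) (hM : 0 < M)
    (hη : ηmin ≤ ηmax) (ρ : ℝ → ℝ) (hnn : ∀ t, 0 ≤ ρ t)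
    (K : ℝ) (hK : ∀ t, ρ t ≤ K) :
    ∃ C : ℝ, ∀ (u : ℤ → ℝ) (x y : ℤ) (E : ℝ),
      ¬(u x = 0 ∧ u (x + 1) = 0) →
      (∀ η ∈ Set.Icc ηmin ηmax, |E - η| ≤ M) →
      (∫ η in ηmin..ηmax, |u y| ^ s / |u (x + 1) + (E - η) * u x| ^ s * ρ η) ≤
        C * Real.sqrt ((u y) ^ 2 + (u (y + 1)) ^ 2) ^ s /
          Real.sqrt ((u x) ^ 2 + (u (x + 1)) ^ 2) ^ s := by
  obtain ⟨C, hC0, hC⟩ := exists_integral_abs_add_sub_mul_rpow_neg_le hs.1.le hs.2 hM hη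
  refine ⟨K * C, fun u x y E hu hE => ?_⟩
  have hK0 : 0 ≤ K := (hnn 0).trans (hK 0)
  have hux : u x ≠ 0 ∨ u (x + 1) ≠ 0 := not_and_or.1 hu
  have hsx : 0 < √(u x ^ 2 + u (x + 1) ^ 2) := by
    refine Real.sqrt_pos.2 ?_
    rcases hux with h | h <;> positivity
  calc ∫ η in ηmin..ηmax, |u y| ^ s / |u (x + 1) + (E - η) * u x| ^ s * ρ η
      = |u y| ^ s * ∫ η in ηmin..ηmax, |u (x + 1) + (E - η) * u x| ^ (-s) * ρ η := by
        rw [← intervalIntegral.integral_const_mul]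
        congr 1 with η
        rw [Real.rpow_neg (abs_nonneg _)]
        ring
    _ ≤ |u y| ^ s * (K * (C * (|u x| + |u (x + 1)|) ^ (-s))) := by
        gcongr
        refine (integral_mul_le_const_mul_integral hη
          (intervalIntegrable_abs_add_sub_mul_rpow (by linarith [hs.2])) (fun η => by positivity)
          hnn hK).trans ?_
        gcongr
        exact hC _ _ _ hux hE
    _ ≤ √(u y ^ 2 + u (y + 1) ^ 2) ^ s * (K * (C * √(u x ^ 2 + u (x + 1) ^ 2) ^ (-s))) := by
        refine mul_le_mul (Real.rpow_le_rpow (abs_nonneg _)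
          (Real.abs_le_sqrt (le_add_of_nonneg_right (sq_nonneg _))) hs.1.le) ?_
          (by positivity) (by positivity)
        refine mul_le_mul_of_nonneg_left (mul_le_mul_of_nonneg_left ?_ hC0) hK0
        exact Real.rpow_le_rpow_of_nonpos hsx (sqrt_sq_add_sq_le_abs_add_abs _ _)
          (neg_nonpos.2 hs.1.le)
    _ = _ := by
        rw [Real.rpow_neg (Real.sqrt_nonneg _)]
        ring

/-- Key fractional-moment estimate for the 1D discrete Anderson model:
`∫ |u(y)|^s / |u(x+1) + (E-η) u(x)|^s ρ(η) dη ≤ C ‖(u(y),u(y+1))‖^s / ‖(u(x),u(x+1))‖^s`. -/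
theorem stmt12 (s M ηmin ηmax : ℝ) (hs : s ∈ Set.Ioo (0 : ℝ) 1) (hM : 0 < M)
    (hη : ηmin ≤ ηmax) (ρ : ℝ → ℝ) (hmeas : Measurable ρ) (hnn : ∀ t, 0 ≤ ρ t)
    (K : ℝ) (hK : ∀ t, ρ t ≤ K)
    (hsupp : ∀ t, t ∉ Set.Icc ηmin ηmax → ρ t = 0)
    (hprob : ∫ t, ρ t = 1) :
    ∃ C : ℝ, ∀ (u : ℤ → ℝ) (x y : ℤ) (E : ℝ),
      ¬(u x = 0 ∧ u (x + 1) = 0) →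
      (∀ η ∈ Set.Icc ηmin ηmax, |E - η| ≤ M) →
      (∫ η in ηmin..ηmax, |u y| ^ s / |u (x + 1) + (E - η) * u x| ^ s * ρ η) ≤
        C * Real.sqrt ((u y) ^ 2 + (u (y + 1)) ^ 2) ^ s /
          Real.sqrt ((u x) ^ 2 + (u (x + 1)) ^ 2) ^ s :=
  stmt12_general s M ηmin ηmax hs hM hη ρ hnn K hK
end
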